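/- arXiv:hep-th/9502068 — 2 statements merged into one kernel-verified Lean document; each statement's English description precedes it below -/
import Mathlib

section
/- In the fixed-point subalgebra Ã_N, the commutator [G_i^{(m)}, A_{kl}^{(n)}] equals (δ_{ik} - δ_{k,i+1} - δ_{li} + δ_{l,i+1})(A_{kl}^{(m+n)} - (-1)^{mN} A_{kl}^{(n-m)}) for 1 ≤ k < l ≤ N, 1 ≤ i ≤ N-1, m ≥ 1, n ∈ Z. -/
noncomputable section
open Matrix LaurentPolynomial

attribute [local instance] LieRing.ofAssociativeRing

/-- The (gl) loop algebra: matrices over Laurent polynomials. -/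
abbrev gl (N : ℕ) := Matrix (Fin N) (Fin N) (LaurentPolynomial ℂ)

/-- The traceless part: the `sl(N)` loop algebra, as a Lie subalgebra over ℂ. -/
def slC (N : ℕ) : LieSubalgebra ℂ (gl N) where
  carrier := {A | Matrix.trace A = 0}
  add_mem' := by
    intro a b ha hb
    simp only [Set.mem_setOf_eq] at *
    rw [Matrix.trace_add, ha, hb, add_zero]
  zero_mem' := by simp
  smul_mem' := by
    intro c A hA
    simp only [Set.mem_setOf_eq] at *
    rw [Matrix.trace_smul, hA, smul_zero]
  lie_mem' := by
    intro x y hx hy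
    simp only [Set.mem_setOf_eq] at *
    rw [Ring.lie_def, Matrix.trace_sub, Matrix.trace_mul_comm, sub_self]

/-- Basis element `tⁿ E_{ij}` (for `i ≠ j`) of the `sl(N)` loop algebra. -/
def TE (N : ℕ) (n : ℤ) (i j : Fin N) (h : i ≠ j) : slC N :=
  ⟨(T n : LaurentPolynomial ℂ) • single i j (1 : LaurentPolynomial ℂ), by
    show Matrix.trace _ = 0
    rw [Matrix.trace_smul, Matrix.trace_single_eq_of_ne i j _ h, smul_zero]⟩

/-- Basis element `tⁿ H_k = tⁿ (E_{kk} - E_{k+1,k+1})` of the `sl(N)` loop algebra. -/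
def TH (N : ℕ) (n : ℤ) (k : Fin N) (hk : (k : ℕ) + 1 < N) : slC N :=
  ⟨(T n : LaurentPolynomial ℂ) • (single k k (1 : LaurentPolynomial ℂ)
      - single (⟨(k : ℕ) + 1, hk⟩ : Fin N) (⟨(k : ℕ) + 1, hk⟩ : Fin N) 1), by
    show Matrix.trace _ = 0
    rw [Matrix.trace_smul, Matrix.trace_sub, Matrix.trace_single_eq_same,
      Matrix.trace_single_eq_same, sub_self, smul_zero]⟩


/-- The fixed vector `A_{ij}^{(n)} = tⁿE_{ij} + (-1)^{i+j+1+nN} t^{-n}E_{ji}`. -/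
def Abasis (N : ℕ) (n : ℤ) (i j : Fin N) (h : i ≠ j) : ↥(slC N) :=
  TE N n i j h
    + (((-1 : ℂ) ^ ((i : ℕ) + (j : ℕ) + 1)) * ((-1 : ℂ) ^ (n * (N : ℤ)))) • TE N (-n) j i h.symm

/-- The fixed vector `G_k^{(n)} = tⁿH_k + (-1)^{nN+1} t^{-n}H_k`. -/
def Gbasis (N : ℕ) (n : ℤ) (k : Fin N) (hk : (k : ℕ) + 1 < N) : ↥(slC N) :=
  TH N n k hk - ((-1 : ℂ) ^ (n * (N : ℤ))) • TH N (-n) k hk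

/-!
`tᵐH_i` acts on `tⁿE_{ab}` by raising the degree to `m + n` and multiplying by the root value
`(ε_a - ε_b)(H_i)`, which changes sign under `a ↔ b`. Expanding `⁅G_i^{(m)}, A_{kl}^{(n)}⁆`
bilinearly gives four such terms, and they match the four terms on the right-hand side because
`(-1)^{(m+n)N} = (-1)^{mN} (-1)^{nN}` and `(-1)^{mN} (-1)^{(n-m)N} = (-1)^{nN}`.
-/

theorem Matrix.lie_single_same_single {n R : Type*} [Fintype n] [DecidableEq n] [Ring R]
    (i a b : n) (c : R) :
    ⁅single i i (1 : R), single a b c⁆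
      = (if a = i then single a b c else 0) - (if b = i then single a b c else 0) := by
  rw [Ring.lie_def]
  by_cases ha : a = i <;> by_cases hb : b = i <;>
    simp [ha, hb, single_mul_single_of_ne, Ne.symm]

/-- The root `ε_a - ε_b` evaluated at `H_i = E_{ii} - E_{i+1,i+1}`. -/
def rootEval {N : ℕ} (i a b : Fin N) : ℂ :=
  ((if a = i then 1 else 0) - (if (a : ℕ) = i + 1 then 1 else 0))
    - ((if b = i then 1 else 0) - (if (b : ℕ) = i + 1 then 1 else 0))

lemma rootEval_swap {N : ℕ} (i a b : Fin N) : rootEval i b a = -rootEval i a b := by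
  rw [rootEval, rootEval]; ring

lemma TH_lie_TE (N : ℕ) (m n : ℤ) (i : Fin N) (hi : (i : ℕ) + 1 < N) (a b : Fin N) (hab : a ≠ b) :
    ⁅TH N m i hi, TE N n a b hab⁆ = rootEval i a b • TE N (m + n) a b hab := by
  ext1
  simp only [LieSubalgebra.coe_bracket, TH, TE, SetLike.val_smul]
  rw [smul_lie, lie_smul, sub_lie, Matrix.lie_single_same_single, Matrix.lie_single_same_single,
    T_add, mul_smul, smul_comm (rootEval i a b) (T m), smul_comm (rootEval i a b) (T n), rootEval]
  congr 2
  simp only [Fin.ext_iff, sub_smul, ite_smul, one_smul, zero_smul]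
  abel

theorem G_bracket_A_general (N : ℕ)
    (m : ℤ) (n : ℤ)
    (i : Fin N) (hi : (i : ℕ) + 1 < N)
    (k l : Fin N) (hkl : k < l) :
    ⁅Gbasis N m i hi, Abasis N n k l (ne_of_lt hkl)⁆
      = (((if k = i then (1 : ℂ) else 0) - (if (k : ℕ) = (i : ℕ) + 1 then 1 else 0)
          - (if l = i then 1 else 0) + (if (l : ℕ) = (i : ℕ) + 1 then 1 else 0)))
          • (Abasis N (m + n) k l (ne_of_lt hkl)
              - ((-1 : ℂ) ^ (m * (N : ℤ))) • Abasis N (n - m) k l (ne_of_lt hkl)) := by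
  have hne : (-1 : ℂ) ≠ 0 := by norm_num
  have hadd : (-1 : ℂ) ^ ((m + n) * N) = (-1) ^ (m * N) * (-1) ^ (n * N) := by
    rw [add_mul, zpow_add₀ hne]
  have hsub : (-1 : ℂ) ^ (m * N) * (-1) ^ ((n - m) * N) = (-1) ^ (n * N) := by
    rw [← zpow_add₀ hne]; ring_nf
  have hcoeff : ((if k = i then (1 : ℂ) else 0) - (if (k : ℕ) = (i : ℕ) + 1 then 1 else 0)
      - (if l = i then 1 else 0) + (if (l : ℕ) = (i : ℕ) + 1 then 1 else 0)) = rootEval i k l := by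
    rw [rootEval]; ring
  rw [hcoeff]
  simp only [Gbasis, Abasis, sub_lie, lie_add, smul_lie, lie_smul, TH_lie_TE]
  rw [rootEval_swap i k l, show m + -n = -(n - m) by ring, show -m + n = n - m by ring,
    show -m + -n = -(m + n) by ring]
  match_scalars
  · ring
  · ring
  · linear_combination rootEval i k l * (-1) ^ ((k : ℕ) + (l : ℕ) + 1) * hsub
  · linear_combination -rootEval i k l * (-1) ^ ((k : ℕ) + (l : ℕ) + 1) * hadd

/-- In the fixed-point subalgebra `Ã_N`,
`[G_i^{(m)}, A_{kl}^{(n)}] = (δ_{ik} - δ_{k,i+1} - δ_{li} + δ_{l,i+1})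
(A_{kl}^{(m+n)} - (-1)^{mN} A_{kl}^{(n-m)})` for `1 ≤ k < l ≤ N`, `1 ≤ i ≤ N-1`, `m ≥ 1`, `n ∈ ℤ`. -/
theorem G_bracket_A (N : ℕ) (hN : 2 ≤ N)
    (m : ℤ) (hm : 1 ≤ m) (n : ℤ)
    (i : Fin N) (hi : (i : ℕ) + 1 < N)
    (k l : Fin N) (hkl : k < l) :
    ⁅Gbasis N m i hi, Abasis N n k l (ne_of_lt hkl)⁆
      = (((if k = i then (1 : ℂ) else 0) - (if (k : ℕ) = (i : ℕ) + 1 then 1 else 0)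
          - (if l = i then 1 else 0) + (if (l : ℕ) = (i : ℕ) + 1 then 1 else 0)))
          • (Abasis N (m + n) k l (ne_of_lt hkl)
              - ((-1 : ℂ) ^ (m * (N : ℤ))) • Abasis N (n - m) k l (ne_of_lt hkl)) :=
  G_bracket_A_general N m n i hi k l hkl
end
end

section
/- The elements ẽ_i = E_{i,i+1} + E_{i+1,i} for 1 ≤ i ≤ N-1 and ẽ_N = tE_{N,1} + t⁻¹E_{1,N} of the sl(N) loop algebra satisfy the generalized Dolan–Grady relations: [ẽ_i,[ẽ_i,ẽ_j]] = ẽ_j whenever i,j are cyclically adjacent mod N, and [ẽ_i,ẽ_j] = 0 for non-adjacent i ≠ j. Hence there is a surjective Lie algebra homomorphism π: A_N → Ã_N with π(e_i) = ẽ_i. -/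
noncomputable section
open Matrix LaurentPolynomial
attribute [local instance 100] LieRing.ofAssociativeRing

noncomputable section

/-- The generalized Dolan–Grady relations for a cyclic family `e` of `N` elements. -/
def DolanGrady {N : ℕ} [NeZero N] {L : Type*} [LieRing L] (e : Fin N → L) : Prop :=
  (∀ i j : Fin N, (j = i + 1 ∨ i = j + 1) → ⁅e i, ⁅e i, e j⁆⁆ = e j) ∧
  (∀ i j : Fin N, i ≠ j → j ≠ i + 1 → i ≠ j + 1 → ⁅e i, e j⁆ = 0)

/-- The right-nested string `S_k(r) = [e_k,[e_{k+1},...,e_{k+r-1}]...]`, with `S _ 0 = 0`. -/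
def S {N : ℕ} [NeZero N] {L : Type*} [LieRing L] (e : Fin N → L) : ℕ → Fin N → L
  | 0, _ => 0
  | 1, k => e k
  | (r + 2), k => ⁅e k, S e (r + 1) (k + 1)⁆

/-- The set of defining relators of the `sl(N)` Onsager algebra inside the free Lie algebra. -/
def OnsRels (N : ℕ) [NeZero N] : Set (FreeLieAlgebra ℂ (Fin N)) :=
  {x | ∃ i j : Fin N, (j = i + 1 ∨ i = j + 1) ∧
      x = ⁅FreeLieAlgebra.of ℂ i, ⁅FreeLieAlgebra.of ℂ i, FreeLieAlgebra.of ℂ j⁆⁆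
            - FreeLieAlgebra.of ℂ j} ∪
  {x | ∃ i j : Fin N, i ≠ j ∧ j ≠ i + 1 ∧ i ≠ j + 1 ∧
      x = ⁅FreeLieAlgebra.of ℂ i, FreeLieAlgebra.of ℂ j⁆}

/-- The Lie ideal generated by the Onsager relators. -/
def OnsIdeal (N : ℕ) [NeZero N] : LieIdeal ℂ (FreeLieAlgebra ℂ (Fin N)) :=
  LieSubmodule.lieSpan ℂ _ (OnsRels N)

/-- The `sl(N)` Onsager algebra, presented by generators and relations. -/
abbrev OnsAlg (N : ℕ) [NeZero N] := FreeLieAlgebra ℂ (Fin N) ⧸ OnsIdeal N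

/-- The generators `e_i` of the `sl(N)` Onsager algebra. -/
def eGen (N : ℕ) [NeZero N] (i : Fin N) : OnsAlg N :=
  LieSubmodule.Quotient.mk (N := OnsIdeal N) (FreeLieAlgebra.of ℂ i)


/-- The elements `ẽ_i` of the loop algebra: `ẽ_i = E_{i,i+1} + E_{i+1,i}` for `1 ≤ i ≤ N-1`,
and `ẽ_N = t E_{N,1} + t⁻¹ E_{1,N}` (0-based indices, cyclic successor `i + 1` in `Fin N`). -/
def etil (N : ℕ) [NeZero N] (i : Fin N) : gl N :=
  (T (if (i : ℕ) + 1 = N then 1 else 0) : LaurentPolynomial ℂ) • single i (i + 1) 1 +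
  (T (if (i : ℕ) + 1 = N then -1 else 0) : LaurentPolynomial ℂ) • single (i + 1) i 1

/-! Writing `ẽ_i = a E_{i,i+1} + a⁻¹ E_{i+1,i}` with `a` a unit (`a = t` for `i = N`, else `1`),
everything reduces to the bracket `[E_{ij}, E_{kl}] = δ_{jk} E_{il} - δ_{li} E_{kj}`: two such
elements on disjoint index pairs commute, and for a chain `i, j, k` of distinct indices the double
bracket `[x, [x, y]]` of `x = a E_{ij} + a⁻¹ E_{ji}` with `y = c E_{jk} + d E_{kj}` returns `y`,
the unit `a` cancelling against `a⁻¹`. Since `N ≥ 3`, cyclically adjacent generators involve three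
distinct indices and non-adjacent ones disjoint pairs. The relations then say exactly that the lift
of `e_i ↦ ẽ_i` from the free Lie algebra kills the defining ideal of `A_N`, and the image of the
induced map is generated by the `ẽ_i`. -/

section PairSingle

variable {R n : Type*} [CommRing R] [DecidableEq n]

def pairSingle (i j : n) (a b : R) : Matrix n n R := single i j a + single j i b

theorem pairSingle_comm (i j : n) (a b : R) : pairSingle i j a b = pairSingle j i b a :=
  add_comm _ _

variable [Fintype n]

theorem lie_single_single (i j k l : n) (a b : R) :
    ⁅single i j a, single k l b⁆ =
      (if j = k then single i l (a * b) else 0) - (if l = i then single k j (b * a) else 0) := by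
  rw [Ring.lie_def]
  congr 1 <;> split_ifs with h
  all_goals first
    | (subst h; exact single_mul_single_same ..)
    | exact single_mul_single_of_ne (h := h) ..

theorem lie_pairSingle_of_disjoint {i j k l : n} (hik : i ≠ k) (hil : i ≠ l) (hjk : j ≠ k)
    (hjl : j ≠ l) (a b c d : R) : ⁅pairSingle i j a b, pairSingle k l c d⁆ = 0 := by
  simp [pairSingle, lie_single_single, hik, hil, hjk, hjl, hik.symm, hil.symm, hjk.symm, hjl.symm]

theorem lie_pairSingle_lie_pairSingle {i j k : n} (hij : i ≠ j) (hik : i ≠ k) (hjk : j ≠ k)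
    {a b : R} (hab : a * b = 1) (c d : R) :
    ⁅pairSingle i j a b, ⁅pairSingle i j a b, pairSingle j k c d⁆⁆ = pairSingle j k c d := by
  have hba : b * a = 1 := by rw [mul_comm, hab]
  simp only [pairSingle, lie_add, add_lie, lie_single_single, hij, hik, hjk, hij.symm,
    hik.symm, hjk.symm, if_true, if_false, sub_zero, zero_sub, add_zero, zero_add,
    lie_neg, neg_neg]
  rw [← mul_assoc, hba, one_mul, mul_assoc, hba, mul_one]

end PairSingle

theorem Fin.self_ne_add_one {N : ℕ} [NeZero N] (hN : 2 ≤ N) (i : Fin N) : i ≠ i + 1 := by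
  rw [Ne, left_eq_add, Fin.ext_iff, Fin.val_one', Fin.val_zero, Nat.mod_eq_of_lt hN]
  exact one_ne_zero

theorem Fin.self_ne_add_one_add_one {N : ℕ} [NeZero N] (hN : 3 ≤ N) (i : Fin N) :
    i ≠ i + 1 + 1 := by
  rw [Ne, add_assoc, left_eq_add, Fin.ext_iff, Fin.val_add, Fin.val_one', Fin.val_zero,
    Nat.mod_eq_of_lt (by omega : 1 < N), Nat.mod_eq_of_lt (by omega : 2 < N)]
  exact two_ne_zero

theorem exists_etil_eq_pairSingle (N : ℕ) [NeZero N] (i : Fin N) :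
    ∃ m : ℤ, etil N i = pairSingle i (i + 1) (T m) (T (-m)) :=
  ⟨if (i : ℕ) + 1 = N then 1 else 0, by
    unfold etil pairSingle
    split_ifs <;> simp [smul_single]⟩

theorem etil_dolanGrady {N : ℕ} [NeZero N] (hN : 3 ≤ N) : DolanGrady (etil N) := by
  have hT (m : ℤ) : (T m : LaurentPolynomial ℂ) * T (-m) = 1 := by
    rw [← T_add, add_neg_cancel, T_zero]
  have h01 (i : Fin N) : i ≠ i + 1 := Fin.self_ne_add_one (by omega) i
  have h02 (i : Fin N) : i ≠ i + 1 + 1 := Fin.self_ne_add_one_add_one hN i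
  constructor
  · rintro i j (rfl | rfl)
    · obtain ⟨m, hm⟩ := exists_etil_eq_pairSingle N i
      obtain ⟨m', hm'⟩ := exists_etil_eq_pairSingle N (i + 1)
      rw [hm, hm']
      exact lie_pairSingle_lie_pairSingle (h01 i) (h02 i) (h01 (i + 1)) (hT m) _ _
    · obtain ⟨m, hm⟩ := exists_etil_eq_pairSingle N (j + 1)
      obtain ⟨m', hm'⟩ := exists_etil_eq_pairSingle N j
      -- the chain `j + 1 + 1, j + 1, j` traversed backwards
      rw [hm, hm', pairSingle_comm (j + 1), pairSingle_comm j]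
      exact lie_pairSingle_lie_pairSingle (h01 (j + 1)).symm (h02 j).symm (h01 j).symm
        (by rw [mul_comm, hT m]) _ _
  · intro i j hij hji hij'
    obtain ⟨m, hm⟩ := exists_etil_eq_pairSingle N i
    obtain ⟨m', hm'⟩ := exists_etil_eq_pairSingle N j
    rw [hm, hm']
    exact lie_pairSingle_of_disjoint hij hij' (Ne.symm hji) (fun h => hij (add_right_cancel h))
      _ _ _ _

namespace LieIdeal

variable {R L L' : Type*} [CommRing R] [LieRing L] [LieAlgebra R L] [LieRing L'] [LieAlgebra R L']

def liftQ (I : LieIdeal R L) (f : L →ₗ⁅R⁆ L') (h : I ≤ f.ker) : L ⧸ I →ₗ⁅R⁆ L' :=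
  { I.toSubmodule.liftQ f.toLinearMap fun _ hx => h hx with
    map_lie' := by
      intro x y
      obtain ⟨x, rfl⟩ := LieSubmodule.Quotient.surjective_mk' I x
      obtain ⟨y, rfl⟩ := LieSubmodule.Quotient.surjective_mk' I y
      exact f.map_lie x y }

@[simp]
theorem liftQ_mk (I : LieIdeal R L) (f : L →ₗ⁅R⁆ L') (h : I ≤ f.ker) (x : L) :
    I.liftQ f h (LieSubmodule.Quotient.mk x) = f x :=
  rfl

theorem range_liftQ (I : LieIdeal R L) (f : L →ₗ⁅R⁆ L') (h : I ≤ f.ker) :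
    (I.liftQ f h).range = f.range := by
  ext y
  constructor
  · rintro ⟨x, rfl⟩
    obtain ⟨x, rfl⟩ := LieSubmodule.Quotient.surjective_mk' I x
    exact ⟨x, rfl⟩
  · rintro ⟨x, rfl⟩
    exact ⟨LieSubmodule.Quotient.mk x, rfl⟩

end LieIdeal

theorem FreeLieAlgebra.range_lift {R X L : Type*} [CommRing R] [LieRing L] [LieAlgebra R L]
    (f : X → L) : (lift R f).range = LieSubalgebra.lieSpan R L (Set.range f) := by
  set K := LieSubalgebra.lieSpan R L (Set.range f)
  apply le_antisymm
  · let g : X → K := fun x => ⟨f x, LieSubalgebra.subset_lieSpan ⟨x, rfl⟩⟩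
    have hfactor : lift R f = K.incl.comp (lift R g) := hom_ext fun x => by simp [g]
    rintro _ ⟨y, rfl⟩
    rw [hfactor]
    exact (lift R g y).2
  · rw [LieSubalgebra.lieSpan_le]
    rintro _ ⟨x, rfl⟩
    exact ⟨of R x, lift_of_apply f x⟩

theorem DolanGrady.onsIdeal_le_ker_lift {N : ℕ} [NeZero N] {L : Type*} [LieRing L]
    [LieAlgebra ℂ L] {e : Fin N → L} (he : DolanGrady e) :
    OnsIdeal N ≤ (FreeLieAlgebra.lift ℂ e).ker := by
  rw [OnsIdeal, LieSubmodule.lieSpan_le]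
  rintro _ (⟨i, j, hadj, rfl⟩ | ⟨i, j, hij, hji, hij', rfl⟩) <;>
    simp only [SetLike.mem_coe, LieHom.mem_ker, map_sub, LieHom.map_lie,
      FreeLieAlgebra.lift_of_apply]
  · rw [he.1 i j hadj, sub_self]
  · exact he.2 i j hij hji hij'

/-- The elements `ẽ_i` of the `sl(N)` loop algebra satisfy the generalized
Dolan–Grady relations; hence there is a Lie algebra homomorphism `π : A_N → L(sl(N))` with
`π(e_i) = ẽ_i`, surjective onto the Lie subalgebra `Ã_N` generated by the `ẽ_i`. -/
theorem etil_satisfies_dolan_grady (N : ℕ) (hN : 3 ≤ N) [NeZero N] :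
    DolanGrady (etil N) ∧
    ∃ π : OnsAlg N →ₗ⁅ℂ⁆ gl N,
      (∀ i : Fin N, π (eGen N i) = etil N i) ∧
      π.range = LieSubalgebra.lieSpan ℂ (gl N) (Set.range (etil N)) := by
  have hDG : DolanGrady (etil N) := etil_dolanGrady hN
  have hker := hDG.onsIdeal_le_ker_lift
  refine ⟨hDG, (OnsIdeal N).liftQ _ hker, fun i => FreeLieAlgebra.lift_of_apply (etil N) i, ?_⟩
  rw [LieIdeal.range_liftQ, FreeLieAlgebra.range_lift]
end
end
end
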